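/- arXiv:1208.6496 — 2 statements merged into one kernel-verified Lean document; each statement's English description precedes it below -/
import Mathlib

section
/- Let d be a positive integer, let a₁, …, a_d be linearly independent vectors in ℝ^d, and let u : ℝ^d × ℝ → ℂ be an infinitely differentiable function satisfying: (i) u(x + a_k, t) = u(x,t) for all x ∈ ℝ^d, t ∈ ℝ and k ∈ {1,…,d}; (ii) ∂u/∂t = Σ_{j=1}^d ∂²u/∂x_j² on ℝ^d × ℝ; and (iii) u(x,t) = 0 for all x ∈ ℝ^d and all t < 0. Then u is identically zero on ℝ^d × ℝ. -/
open Set Filter Topology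

/-- Directional derivative operator on functions on `ℝ^d × ℝ`. -/
noncomputable def dirD {d : ℕ} (v : (Fin d → ℝ) × ℝ) (f : (Fin d → ℝ) × ℝ → ℂ) :
    (Fin d → ℝ) × ℝ → ℂ := fun z => fderiv ℝ f z v

lemma hasDerivAt_line {d : ℕ} {f : (Fin d → ℝ) × ℝ → ℂ} (hf : ContDiff ℝ (⊤ : ℕ∞) f)
    (z w : (Fin d → ℝ) × ℝ) (s : ℝ) :
    HasDerivAt (fun s : ℝ => f (z + s • w)) (dirD w f (z + s • w)) s := by
  have h1 : HasDerivAt (fun s : ℝ => z + s • w) w s := by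
    simpa using ((hasDerivAt_id s).smul_const w).const_add z
  exact ((hf.differentiable (by simp) (z + s • w)).hasFDerivAt).comp_hasDerivAt s h1

lemma contDiff_dirD {d : ℕ} {f : (Fin d → ℝ) × ℝ → ℂ} (hf : ContDiff ℝ (⊤ : ℕ∞) f)
    (w : (Fin d → ℝ) × ℝ) : ContDiff ℝ (⊤ : ℕ∞) (dirD w f) := by
  have h := hf.fderiv_right (m := (⊤ : ℕ∞)) (by simp)
  exact (ContinuousLinearMap.apply ℝ ℂ w).contDiff.comp h

lemma dirD_const_smul {d : ℕ} {f : (Fin d → ℝ) × ℝ → ℂ} (hf : ContDiff ℝ (⊤ : ℕ∞) f)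
    (c : ℂ) (v : (Fin d → ℝ) × ℝ) :
    dirD v (fun y => c • f y) = fun z' => c • dirD v f z' := by
  funext z'
  unfold dirD
  rw [fderiv_fun_const_smul (hf.differentiable (by simp) z')]
  simp

/-- real part along a line -/
lemma hasDerivAt_line_re {d : ℕ} {f : (Fin d → ℝ) × ℝ → ℂ} (hf : ContDiff ℝ (⊤ : ℕ∞) f)
    (z w : (Fin d → ℝ) × ℝ) (s : ℝ) :
    HasDerivAt (fun s : ℝ => (f (z + s • w)).re) ((dirD w f (z + s • w)).re) s :=
  (Complex.reCLM.hasFDerivAt.comp_hasDerivAt s (hasDerivAt_line hf z w s))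

/-- Second derivative test at a global maximum. -/
lemma second_deriv_test {g g' g'' : ℝ → ℝ}
    (hg : ∀ s, HasDerivAt g (g' s) s) (hg' : ∀ s, HasDerivAt g' (g'' s) s)
    (hmax : ∀ s, g s ≤ g 0) : g'' 0 ≤ 0 := by
  by_contra h
  push_neg at h
  have hd0 : g' 0 = 0 := by
    have : IsLocalMax g 0 := Filter.Eventually.of_forall hmax
    exact this.hasDerivAt_eq_zero (hg 0)
  have hslope : Tendsto (slope g' 0) (𝓝[≠] (0:ℝ)) (𝓝 (g'' 0)) :=
    hasDerivAt_iff_tendsto_slope.mp (hg' 0)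
  have hpos : ∀ᶠ s in 𝓝[>] (0:ℝ), 0 < slope g' 0 s :=
    ((hslope.mono_left (nhdsWithin_mono _ (fun s hs => ne_of_gt hs))).eventually
      (eventually_gt_nhds h))
  have hpos' : ∀ᶠ s in 𝓝[>] (0:ℝ), 0 < g' s := by
    filter_upwards [hpos, self_mem_nhdsWithin] with s hs hs'
    have h1 : slope g' 0 s = g' s / s := by simp [slope, hd0]; ring
    rw [h1] at hs
    have := mul_pos hs (show (0:ℝ) < s from hs')
    calc (0:ℝ) < g' s / s * s := this
    _ = g' s := div_mul_cancel₀ _ (ne_of_gt hs')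
  obtain ⟨δ, hδ, hδpos⟩ := (nhdsGT_basis (0:ℝ)).eventually_iff.mp hpos'
  have hmono : StrictMonoOn g (Icc 0 δ) := by
    apply strictMonoOn_of_deriv_pos (convex_Icc 0 δ)
      (fun s _ => (hg s).continuousAt.continuousWithinAt)
    intro s hs
    rw [interior_Icc] at hs
    rw [(hg s).deriv]
    exact hδpos ⟨hs.1, hs.2⟩
  have : g 0 < g δ := hmono ⟨le_rfl, le_of_lt hδ⟩ ⟨le_of_lt hδ, le_rfl⟩ hδ
  exact absurd (hmax δ) (not_le.mpr this)

section
variable {d : ℕ} {a : Fin d → Fin d → ℝ} {u : (Fin d → ℝ) × ℝ → ℂ}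

lemma per_int (hper : ∀ x : Fin d → ℝ, ∀ t : ℝ, ∀ k : Fin d, u (x + a k, t) = u (x, t))
    (x : Fin d → ℝ) (t : ℝ) (k : Fin d) : ∀ n : ℤ, u (x + (n : ℝ) • a k, t) = u (x, t) := by
  intro n
  induction n using Int.induction_on with
  | zero => simp
  | succ n ih =>
    have h2 : x + ((n:ℝ)+1) • a k = (x + (n:ℝ) • a k) + a k := by module
    push_cast at ih ⊢
    rw [h2, hper, ih]
  | pred n ih =>
    have h2 : x + (-(n:ℝ)) • a k = (x + (-(n:ℝ)-1) • a k) + a k := by module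
    push_cast at ih ⊢
    calc u (x + (-(n:ℝ)-1) • a k, t)
        = u ((x + (-(n:ℝ)-1) • a k) + a k, t) := (hper _ _ _).symm
      _ = u (x, t) := by rw [← h2, ih]

lemma per_sum (hper : ∀ x : Fin d → ℝ, ∀ t : ℝ, ∀ k : Fin d, u (x + a k, t) = u (x, t))
    (x : Fin d → ℝ) (t : ℝ) (m : Fin d → ℤ) :
    u (x + ∑ k, ((m k : ℝ)) • a k, t) = u (x, t) := by
  have H : ∀ s : Finset (Fin d), u (x + ∑ k ∈ s, ((m k : ℝ)) • a k, t) = u (x, t) := by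
    intro s
    induction s using Finset.induction_on with
    | empty => simp
    | @insert k s' hk ih =>
      rw [Finset.sum_insert hk]
      have h2 : x + ((m k : ℝ) • a k + ∑ j ∈ s', (m j : ℝ) • a j)
          = (x + ∑ j ∈ s', (m j : ℝ) • a j) + (m k : ℝ) • a k := by module
      rw [h2, per_int hper _ _ _ (m k), ih]
  exact H Finset.univ

/-- Reduction to a compact fundamental domain. -/
lemma decomp (hd : 0 < d) (ha : LinearIndependent ℝ a)
    (hper : ∀ x : Fin d → ℝ, ∀ t : ℝ, ∀ k : Fin d, u (x + a k, t) = u (x, t)) :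
    ∃ K : Set (Fin d → ℝ), IsCompact K ∧ K.Nonempty ∧
      ∀ x : Fin d → ℝ, ∀ t : ℝ, ∃ x' ∈ K, u (x, t) = u (x', t) := by
  haveI : Nonempty (Fin d) := ⟨⟨0, hd⟩⟩
  have hcard : Fintype.card (Fin d) = Module.finrank ℝ (Fin d → ℝ) := by
    simp [Module.finrank_fin_fun]
  let b : Module.Basis (Fin d) ℝ (Fin d → ℝ) := basisOfLinearIndependentOfCardEqFinrank ha hcard
  have hb : ⇑b = a := coe_basisOfLinearIndependentOfCardEqFinrank ha hcard
  let φ : (Fin d → ℝ) → (Fin d → ℝ) := fun c => ∑ k, c k • a k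
  have hφ : Continuous φ := by
    apply continuous_finset_sum
    exact fun k _ => (continuous_apply k).smul continuous_const
  refine ⟨φ '' (Icc 0 1), (isCompact_Icc).image hφ, ⟨φ 0, ⟨0, by simp, rfl⟩⟩, ?_⟩
  intro x t
  set r : Fin d → ℝ := fun k => b.repr x k with hr
  set c : Fin d → ℝ := fun k => Int.fract (r k) with hc
  have hcK : c ∈ Icc (0 : Fin d → ℝ) 1 := by
    constructor
    · intro k; exact Int.fract_nonneg _
    · intro k; exact le_of_lt (Int.fract_lt_one _)
  refine ⟨φ c, ⟨c, hcK, rfl⟩, ?_⟩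
  have hx : x = φ c + ∑ k, ((⌊r k⌋ : ℝ)) • a k := by
    have h1 : ∑ k, r k • a k = x := by
      have := b.sum_repr x
      rw [hb] at this
      exact this
    rw [← h1, ← Finset.sum_add_distrib]
    congr 1
    funext k
    rw [← add_smul, Int.fract_add_floor]
  rw [hx, per_sum hper]

lemma at_zero (hu : ContDiff ℝ (⊤ : ℕ∞) u)
    (hpast : ∀ x : Fin d → ℝ, ∀ t : ℝ, t < 0 → u (x, t) = 0) (x : Fin d → ℝ) :
    u (x, 0) = 0 := by
  have hc : Continuous (fun t : ℝ => u (x, t)) :=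
    hu.continuous.comp (continuous_const.prodMk continuous_id)
  have h1 : Tendsto (fun t : ℝ => u (x, t)) (𝓝[<] (0:ℝ)) (𝓝 (u (x, 0))) :=
    (hc.tendsto 0).mono_left nhdsWithin_le_nhds
  have h2 : Tendsto (fun t : ℝ => u (x, t)) (𝓝[<] (0:ℝ)) (𝓝 0) := by
    apply Tendsto.congr' _ tendsto_const_nhds
    filter_upwards [self_mem_nhdsWithin] with t ht
    exact (hpast x t ht).symm
  exact tendsto_nhds_unique h1 h2

/-- Key maximum principle: the real part is nonpositive for nonnegative times. -/
lemma key_re_nonpos (hd : 0 < d) (ha : LinearIndependent ℝ a) (hu : ContDiff ℝ (⊤ : ℕ∞) u)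
    (hper : ∀ x : Fin d → ℝ, ∀ t : ℝ, ∀ k : Fin d, u (x + a k, t) = u (x, t))
    (hheat : ∀ z : (Fin d → ℝ) × ℝ,
      dirD (0, 1) u z = ∑ j, dirD (Pi.single j 1, 0) (dirD (Pi.single j 1, 0) u) z)
    (hpast : ∀ x : Fin d → ℝ, ∀ t : ℝ, t < 0 → u (x, t) = 0) :
    ∀ x : Fin d → ℝ, ∀ t : ℝ, 0 ≤ t → (u (x, t)).re ≤ 0 := by
  obtain ⟨K, hKc, hKne, hKdec⟩ := decomp hd ha hper
  intro x t ht
  -- it suffices to show `(u (x,t)).re ≤ ε * t` for every `ε > 0`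
  suffices h : ∀ ε : ℝ, 0 < ε → (u (x, t)).re ≤ ε * t by
    by_contra hr
    push_neg at hr
    set r := (u (x, t)).re
    have hε : 0 < r / (2 * (t + 1)) := by positivity
    have := h _ hε
    have hlt : r / (2 * (t + 1)) * t < r := by
      rw [div_mul_eq_mul_div, div_lt_iff₀ (by positivity)]
      nlinarith
    linarith
  intro ε hε
  set w : (Fin d → ℝ) × ℝ → ℝ := fun z => (u z).re - ε * z.2 with hw
  have hwc : Continuous w := by
    exact (Complex.continuous_re.comp hu.continuous).sub (continuous_const.mul continuous_snd)
  obtain ⟨z₀, hz₀mem, hz₀max⟩ :=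
    (hKc.prod isCompact_Icc).exists_isMaxOn (hKne.prod ⟨0, ⟨le_rfl, ht⟩⟩)
      hwc.continuousOn
  rw [isMaxOn_iff] at hz₀max
  -- global bound
  have hbound : ∀ y : Fin d → ℝ, ∀ s : ℝ, 0 ≤ s → s ≤ t → w (y, s) ≤ w z₀ := by
    intro y s hs0 hst
    obtain ⟨y', hy'K, hy'⟩ := hKdec y s
    have : w (y, s) = w (y', s) := by simp [hw, hy']
    rw [this]
    exact hz₀max (y', s) ⟨hy'K, ⟨hs0, hst⟩⟩
  have hz₀2 : z₀.2 ∈ Icc (0:ℝ) t := hz₀mem.2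
  rcases eq_or_lt_of_le hz₀2.1 with h0 | h0
  · -- max attained at time 0 : max value is 0
    have hz₀val : w z₀ = 0 := by
      have : z₀ = (z₀.1, (0:ℝ)) := by rw [h0]
      rw [this, hw]
      simp [at_zero hu hpast z₀.1]
    have := hbound x t ht le_rfl
    rw [hz₀val, hw] at this
    simp only at this
    linarith
  · -- max attained at positive time: contradiction
    exfalso
    -- spatial second derivatives are nonpositive at z₀
    have hsp : ∀ j : Fin d,
        (dirD (Pi.single j 1, 0) (dirD (Pi.single j 1, 0) u) z₀).re ≤ 0 := by
      intro j
      set wj : (Fin d → ℝ) × ℝ := (Pi.single j 1, (0:ℝ)) with hwj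
      have hg : ∀ s, HasDerivAt (fun s : ℝ => (u (z₀ + s • wj)).re)
          ((dirD wj u (z₀ + s • wj)).re) s := fun s => hasDerivAt_line_re hu z₀ wj s
      have hg' : ∀ s, HasDerivAt (fun s : ℝ => (dirD wj u (z₀ + s • wj)).re)
          ((dirD wj (dirD wj u) (z₀ + s • wj)).re) s :=
        fun s => hasDerivAt_line_re (contDiff_dirD hu wj) z₀ wj s
      have hmax : ∀ s : ℝ, (u (z₀ + s • wj)).re ≤ (u (z₀ + (0:ℝ) • wj)).re := by
        intro s
        have h2nd : (z₀ + s • wj).2 = z₀.2 := by simp [hwj]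
        have hb := hbound (z₀ + s • wj).1 z₀.2 hz₀2.1 hz₀2.2
        have he : ((z₀ + s • wj).1, z₀.2) = z₀ + s • wj := by
          rw [← h2nd]
        rw [he] at hb
        simp only [hw, h2nd] at hb ⊢
        simpa using hb
      have := second_deriv_test hg hg' (by simpa using hmax)
      simpa using this
    -- time derivative at z₀
    have hD : (dirD (0, 1) u z₀).re ≤ 0 := by
      rw [hheat z₀, Complex.re_sum]
      exact Finset.sum_nonpos (fun j _ => hsp j)
    -- derivative of t ↦ w (z₀.1, t) at z₀.2
    have heq : (fun s : ℝ => (z₀.1, (0:ℝ)) + s • ((0 : Fin d → ℝ), (1:ℝ)))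
        = fun s : ℝ => (z₀.1, s) := by
      funext s
      ext <;> simp
    have hceq : ∀ s : ℝ, (z₀.1, (0:ℝ)) + s • ((0 : Fin d → ℝ), (1:ℝ)) = (z₀.1, s) :=
      fun s => congrFun heq s
    have hder0 := hasDerivAt_line_re hu (z₀.1, (0:ℝ)) ((0 : Fin d → ℝ), (1:ℝ)) z₀.2
    simp only [hceq, Prod.mk.eta] at hder0
    have hderw : HasDerivAt (fun s : ℝ => w (z₀.1, s)) ((dirD (0,1) u z₀).re - ε) z₀.2 := by
      have h2 : HasDerivAt (fun s : ℝ => ε * s) ε z₀.2 := by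
        simpa using (hasDerivAt_id z₀.2).const_mul ε
      exact hder0.sub h2
    -- the slope from the left is nonnegative
    have hslope : Tendsto (slope (fun s : ℝ => w (z₀.1, s)) z₀.2) (𝓝[<] z₀.2)
        (𝓝 ((dirD (0,1) u z₀).re - ε)) :=
      (hasDerivAt_iff_tendsto_slope.mp hderw).mono_left
        (nhdsWithin_mono _ (fun s hs => ne_of_lt hs))
    have hnn : 0 ≤ (dirD (0,1) u z₀).re - ε := by
      apply ge_of_tendsto hslope
      have hev : ∀ᶠ s in 𝓝[<] z₀.2, 0 < s :=
        eventually_nhdsWithin_of_eventually_nhds (eventually_gt_nhds h0)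
      filter_upwards [hev, self_mem_nhdsWithin] with s hs0 hs1
      have hles : w (z₀.1, s) ≤ w z₀ :=
        hbound z₀.1 s (le_of_lt hs0) (le_of_lt (lt_of_lt_of_le hs1 hz₀2.2))
      have hwz : w (z₀.1, z₀.2) = w z₀ := rfl
      rw [slope_def_field]
      rw [div_nonneg_iff]
      right
      constructor
      · rw [hwz]; linarith
      · exact sub_nonpos.mpr (le_of_lt hs1)
    linarith
end

/-- (Example 2.2, smooth form.) A smooth, spatially periodic solution of the
heat equation `∂u/∂t = Σ_j ∂²u/∂x_j²` that vanishes for all negative times vanishes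
identically. -/
theorem heat_spatially_periodic_autonomous (d : ℕ) (hd : 0 < d)
    (a : Fin d → Fin d → ℝ) (ha : LinearIndependent ℝ a)
    (u : (Fin d → ℝ) × ℝ → ℂ) (hu : ContDiff ℝ (⊤ : ℕ∞) u)
    (hper : ∀ x : Fin d → ℝ, ∀ t : ℝ, ∀ k : Fin d, u (x + a k, t) = u (x, t))
    (hheat : ∀ z : (Fin d → ℝ) × ℝ,
      dirD (0, 1) u z = ∑ j, dirD (Pi.single j 1, 0) (dirD (Pi.single j 1, 0) u) z)
    (hpast : ∀ x : Fin d → ℝ, ∀ t : ℝ, t < 0 → u (x, t) = 0) :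
    ∀ z : (Fin d → ℝ) × ℝ, u z = 0 := by
  -- apply the key lemma to c • u for c ∈ {1, -1, i, -i}
  have main : ∀ c : ℂ, ∀ x : Fin d → ℝ, ∀ t : ℝ, 0 ≤ t → ((c • u) (x, t)).re ≤ 0 := by
    intro c
    apply key_re_nonpos hd ha (hu.const_smul c)
    · intro x t k; simp [hper x t k]
    · intro z
      have hRHS : ∀ j : Fin d,
          dirD (Pi.single j 1, 0) (dirD (Pi.single j 1, 0) (fun y => c • u y)) z
            = c • dirD (Pi.single j 1, 0) (dirD (Pi.single j 1, 0) u) z := by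
        intro j
        rw [dirD_const_smul hu c, dirD_const_smul (contDiff_dirD hu _) c]
      calc dirD (0, 1) (fun y => c • u y) z = c • dirD (0, 1) u z := by
            rw [dirD_const_smul hu c]
        _ = c • ∑ j, dirD (Pi.single j 1, 0) (dirD (Pi.single j 1, 0) u) z := by
            rw [hheat z]
        _ = ∑ j, c • dirD (Pi.single j 1, 0) (dirD (Pi.single j 1, 0) u) z :=
            Finset.smul_sum
        _ = _ := Finset.sum_congr rfl (fun j _ => (hRHS j).symm)
    · intro x t htneg; simp [hpast x t htneg]
  intro z
  obtain ⟨x, t⟩ := z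
  rcases lt_or_ge t 0 with hlt | hge
  · exact hpast x t hlt
  · have h1 := main 1 x t hge
    have h2 := main (-1) x t hge
    have h3 := main Complex.I x t hge
    have h4 := main (-Complex.I) x t hge
    simp only [Pi.smul_apply, smul_eq_mul, one_mul, neg_one_mul, neg_mul,
      Complex.neg_re, Complex.mul_re, Complex.I_re, Complex.I_im] at h1 h2 h3 h4
    apply Complex.ext
    · simp only [Complex.zero_re]; linarith
    · simp only [Complex.zero_im]
      nlinarith [h3, h4]
end

section
/- Let d be a positive integer and let a₁, …, a_d be linearly independent vectors in ℝ^d. Then there do not exist an infinitely differentiable function w : ℝ^d × ℝ → ℂ and a real number T ≥ 0 such that: (i) w(x + a_k, t) = w(x,t) for all x, t and all k ∈ {1,…,d}; (ii) ∂w/∂t = Σ_{j=1}^d ∂²w/∂x_j² on ℝ^d × ℝ; (iii) w(x,t) = 0 for all x and all t < 0; and (iv) w(x,t) = 1 for all x and all t > T. In particular, the smooth spatially periodic behaviour of the heat operator, containing the constant trajectories 0 and 1, is not controllable. -/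
namespace HeatAux

open MeasureTheory Bornology Metric Set

variable {d : ℕ}

/-- A continuous function is integrable on a bounded measurable set. -/
lemma integrableOn_of_continuous {f : (Fin d → ℝ) → ℂ} (hf : Continuous f)
    {D : Set (Fin d → ℝ)} (hDb : IsBounded D) :
    IntegrableOn f D := by
  have h : IntegrableOn f (closure D) volume :=
    hf.continuousOn.integrableOn_compact hDb.isCompact_closure
  exact h.mono_set subset_closure

/-- `dirD` preserves smoothness. -/
lemma contDiff_dirD {g : (Fin d → ℝ) × ℝ → ℂ} (hg : ContDiff ℝ (⊤ : ℕ∞) g)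
    (v : (Fin d → ℝ) × ℝ) : ContDiff ℝ (⊤ : ℕ∞) (dirD v g) := by
  have h1 : ContDiff ℝ (⊤ : ℕ∞) (fun z => fderiv ℝ g z) := hg.fderiv_right (by simp)
  exact h1.clm_apply contDiff_const

/-- Translation invariance of `fderiv`-applications for periodic functions. -/
lemma fderiv_periodic {g : (Fin d → ℝ) × ℝ → ℂ} (hg : ContDiff ℝ (⊤ : ℕ∞) g)
    {c : (Fin d → ℝ) × ℝ} (hc : ∀ z, g (z + c) = g z) (z : (Fin d → ℝ) × ℝ) :
    fderiv ℝ g (z + c) = fderiv ℝ g z := by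
  have hgc : (fun z => g (z + c)) = g := funext hc
  have h1 : HasFDerivAt (fun z => g (z + c)) (fderiv ℝ g (z + c)) z := by
    have hdiff : HasFDerivAt g (fderiv ℝ g (z + c)) (z + c) :=
      ((hg.differentiable (by simp)) (z + c)).hasFDerivAt
    have hA : HasFDerivAt (fun z : (Fin d → ℝ) × ℝ => z + c)
        (ContinuousLinearMap.id ℝ _) z := (hasFDerivAt_id z).add_const c
    exact hdiff.comp z hA
  rw [hgc] at h1
  exact (h1.fderiv).symm

/-- Derivative of parametrized set integral over a bounded measurable set. -/
lemma hasDerivAt_setIntegral {g : (Fin d → ℝ) × ℝ → ℂ} (hg : ContDiff ℝ (⊤ : ℕ∞) g)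
    {D : Set (Fin d → ℝ)} (hDm : MeasurableSet D) (hDb : IsBounded D) (t₀ : ℝ) :
    HasDerivAt (fun t => ∫ x in D, g (x, t))
      (∫ x in D, fderiv ℝ g (x, t₀) (0, 1)) t₀ := by
  have hgc : Continuous g := hg.continuous
  have hfc : Continuous (fun z => fderiv ℝ g z (0, 1)) :=
    (hg.continuous_fderiv (by simp)).clm_apply continuous_const
  -- compact set containing all relevant points
  have hK : IsCompact ((closure D) ×ˢ Icc (t₀ - 1) (t₀ + 1)) :=
    hDb.isCompact_closure.prod isCompact_Icc
  obtain ⟨C, hC⟩ := hK.exists_bound_of_continuousOn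
    ((hfc.comp continuous_id).continuousOn)
  have key := hasDerivAt_integral_of_dominated_loc_of_deriv_le
    (F := fun t x => g (x, t)) (F' := fun t x => fderiv ℝ g (x, t) (0, 1))
    (μ := volume.restrict D) (bound := fun _ => C) (x₀ := t₀) (s := ball t₀ 1)
    (ball_mem_nhds t₀ one_pos)
    (Filter.Eventually.of_forall fun t =>
      (hgc.comp (continuous_id.prodMk continuous_const)).aestronglyMeasurable)
    (integrableOn_of_continuous
      (hgc.comp (continuous_id.prodMk continuous_const)) hDb)
    ((hfc.comp (continuous_id.prodMk continuous_const)).aestronglyMeasurable)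
    ?_ ?_ ?_
  · exact key.2
  · filter_upwards [ae_restrict_mem hDm] with x hx
    intro t ht
    refine hC (x, t) ?_
    refine ⟨subset_closure hx, ?_⟩
    have := mem_ball_iff_norm.mp ht
    have h2 : |t - t₀| < 1 := by simpa [Real.norm_eq_abs] using this
    constructor <;> [linarith [abs_lt.mp h2 |>.1]; linarith [abs_lt.mp h2 |>.2]]
  · exact (integrableOn_const hDb.measure_lt_top.ne)
  · filter_upwards with x
    intro t _
    have h1 : HasDerivAt (fun t : ℝ => ((x : Fin d → ℝ), t)) (0, 1) t :=
      (hasDerivAt_const t x).prodMk (hasDerivAt_id t)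
    exact (((hg.differentiable (by simp)) (x, t)).hasFDerivAt).comp_hasDerivAt t h1

end HeatAux

open MeasureTheory Bornology Metric Set Submodule

/-- (Example 3.3, smooth form.) There is no smooth, spatially periodic
solution of the heat equation `∂w/∂t = Σ_j ∂²w/∂x_j²` that equals `0` for all `t < 0` and
equals `1` for all `t > T` (for some `T ≥ 0`); in particular the smooth spatially periodic
behaviour of the heat operator is not controllable. -/
theorem heat_spatially_periodic_not_controllable (d : ℕ) (hd : 0 < d)
    (a : Fin d → Fin d → ℝ) (ha : LinearIndependent ℝ a) :
    ¬ ∃ (w : (Fin d → ℝ) × ℝ → ℂ) (T : ℝ), 0 ≤ T ∧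
        ContDiff ℝ (⊤ : ℕ∞) w ∧
        (∀ x : Fin d → ℝ, ∀ t : ℝ, ∀ k : Fin d, w (x + a k, t) = w (x, t)) ∧
        (∀ z : (Fin d → ℝ) × ℝ,
          dirD (0, 1) w z = ∑ j, dirD (Pi.single j 1, 0) (dirD (Pi.single j 1, 0) w) z) ∧
        (∀ x : Fin d → ℝ, ∀ t : ℝ, t < 0 → w (x, t) = 0) ∧
        (∀ x : Fin d → ℝ, ∀ t : ℝ, T < t → w (x, t) = 1) := by
  rintro ⟨w, T, hT, hsm, hper, hheat, h0, h1⟩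
  classical
  haveI : Nonempty (Fin d) := Fin.pos_iff_nonempty.mp hd
  -- the basis formed by the `a k`
  have hcard : Fintype.card (Fin d) = Module.finrank ℝ (Fin d → ℝ) := by
    simp [Module.finrank_fintype_fun_eq_card]
  let b : Module.Basis (Fin d) ℝ (Fin d → ℝ) := basisOfLinearIndependentOfCardEqFinrank ha hcard
  have hb : ⇑b = a := coe_basisOfLinearIndependentOfCardEqFinrank ha hcard
  -- the lattice
  set Λ : Submodule ℤ (Fin d → ℝ) := span ℤ (Set.range ⇑b) with hΛ
  -- spatial periodicity of any "spatially periodic" function extends to the lattice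
  have hSPw : ∀ l ∈ Λ, ∀ x t, w (x + l, t) = w (x, t) := by
    intro l hl
    induction hl using Submodule.span_induction with
    | mem l hlmem =>
      obtain ⟨k, rfl⟩ := hlmem
      intro x t; rw [hb]; exact hper x t k
    | zero => intro x t; simp
    | add l l' _ _ hl hl' =>
      intro x t
      rw [← add_assoc, hl' (x + l) t, hl x t]
    | smul n l _ hl =>
      -- first: invariance under negation
      have hneg : ∀ x t, w (x + -l, t) = w (x, t) := by
        intro x t
        have := hl (x + -l) t
        simpa using this.symm
      induction n using Int.induction_on with
      | zero => intro x t; simp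
      | succ n ih =>
        intro x t
        have h1 : ((n : ℤ) + 1) • l = (n : ℤ) • l + l := by rw [add_smul, one_smul]
        rw [h1, ← add_assoc, hl, ih]
      | pred n ih =>
        intro x t
        have h1 : (-(n : ℤ) - 1) • l = (-(n : ℤ)) • l + -l := by
          rw [sub_smul, one_smul, sub_eq_add_neg]
        rw [h1, ← add_assoc, hneg, ih]
  -- fundamental domain
  set D : Set (Fin d → ℝ) := ZSpan.fundamentalDomain b with hD
  have hDm : MeasurableSet D := ZSpan.fundamentalDomain_measurableSet b
  have hDb : IsBounded D := ZSpan.fundamentalDomain_isBounded b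
  have hfund : IsAddFundamentalDomain Λ D volume := ZSpan.isAddFundamentalDomain b volume
  haveI hMV : MeasurableVAdd Λ (Fin d → ℝ) :=
    (inferInstance : MeasurableVAdd Λ.toAddSubgroup (Fin d → ℝ))
  haveI hVI : VAddInvariantMeasure Λ (Fin d → ℝ) volume :=
    (inferInstance : VAddInvariantMeasure Λ.toAddSubgroup (Fin d → ℝ) volume)
  -- Key lemma: spatial integrals of spatial directional derivatives vanish
  have hKey : ∀ (g : (Fin d → ℝ) × ℝ → ℂ), ContDiff ℝ (⊤ : ℕ∞) g →
      (∀ l ∈ Λ, ∀ x t, g (x + l, t) = g (x, t)) →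
      ∀ (v : Fin d → ℝ) (t : ℝ), ∫ x in D, fderiv ℝ g (x, t) (v, 0) = 0 := by
    intro g hg hSP v t
    -- the auxiliary function translated in direction v
    set G : (Fin d → ℝ) × ℝ → ℂ := fun z => g (z.1 + z.2 • v, t) with hG
    have hGsm : ContDiff ℝ (⊤ : ℕ∞) G := by
      apply hg.comp
      exact (contDiff_fst.add (contDiff_snd.smul contDiff_const)).prodMk contDiff_const
    -- derivative of φ(s) = ∫_D G(x,s) at 0
    have hder := HeatAux.hasDerivAt_setIntegral hGsm hDm hDb 0
    -- φ is constant
    have hconst : ∀ s : ℝ, (∫ x in D, G (x, s)) = ∫ x in D, G (x, 0) := by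
      intro s
      have h2 : (∫ x in D, G (x, s)) = ∫ x in D, g (x + s • v, t) := by
        simp [hG]
      have h3 : (∫ x in D, G (x, 0)) = ∫ x in D, g (x, t) := by
        simp [hG]
      rw [h2, h3]
      -- change variables by translation
      set c : Fin d → ℝ := s • v with hc
      have hmp : MeasurePreserving (fun x : Fin d → ℝ => x + c) volume volume :=
        measurePreserving_add_right volume c
      have hemb : MeasurableEmbedding (fun x : Fin d → ℝ => x + c) :=
        (MeasurableEquiv.addRight c).measurableEmbedding
      have h4 : (∫ x in (fun x : Fin d → ℝ => x + c) '' D, g (x, t)) =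
          ∫ x in D, g (x + c, t) :=
        hmp.setIntegral_image_emb hemb _ _
      rw [← h4]
      -- the translated set is also a fundamental domain
      have hfund' : IsAddFundamentalDomain Λ ((fun x : Fin d → ℝ => x + c) '' D) volume := by
        refine hfund.image_of_equiv (Equiv.addRight c) ?_ (Equiv.refl _) ?_
        · exact (measurePreserving_add_right volume (-c)).quasiMeasurePreserving
        · intro l x
          show (l +ᵥ x) + c = l +ᵥ (x + c)
          show ((l : Fin d → ℝ) + x) + c = (l : Fin d → ℝ) + (x + c)
          rw [add_assoc]
      refine hfund'.setIntegral_eq hfund (fun l x => ?_)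
      show g ((l : Fin d → ℝ) + x, t) = g (x, t)
      rw [add_comm]
      exact hSP l l.2 x t
    -- hence the derivative is zero
    have hφ : (fun s => ∫ x in D, G (x, s)) = fun _ => ∫ x in D, G (x, 0) :=
      funext hconst
    rw [hφ] at hder
    have hzero : (∫ x in D, fderiv ℝ G (x, 0) (0, 1)) = 0 :=
      hder.unique (hasDerivAt_const 0 _)
    -- compute fderiv G (x,0) (0,1) = fderiv g (x,t) (v,0)
    have hcomp : ∀ x : Fin d → ℝ, fderiv ℝ G (x, 0) (0, 1) = fderiv ℝ g (x, t) (v, 0) := by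
      intro x
      -- G = g ∘ ψ with ψ affine
      have hψ : HasFDerivAt (fun z : (Fin d → ℝ) × ℝ => (z.1 + z.2 • v, t))
          (((ContinuousLinearMap.fst ℝ (Fin d → ℝ) ℝ) +
            (ContinuousLinearMap.snd ℝ (Fin d → ℝ) ℝ).smulRight v).prod
            (0 : ((Fin d → ℝ) × ℝ) →L[ℝ] ℝ)) (x, (0 : ℝ)) := by
        apply HasFDerivAt.prodMk
        · exact ((ContinuousLinearMap.fst ℝ (Fin d → ℝ) ℝ) +
            (ContinuousLinearMap.snd ℝ (Fin d → ℝ) ℝ).smulRight v).hasFDerivAt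
        · exact hasFDerivAt_const t _
      have hgd : HasFDerivAt g (fderiv ℝ g (x + (0:ℝ) • v, t)) (x + (0:ℝ) • v, t) :=
        ((hg.differentiable (by simp)) _).hasFDerivAt
      have hcd : HasFDerivAt G
          ((fderiv ℝ g (x + (0:ℝ) • v, t)).comp
            (((ContinuousLinearMap.fst ℝ (Fin d → ℝ) ℝ) +
              (ContinuousLinearMap.snd ℝ (Fin d → ℝ) ℝ).smulRight v).prod
              (0 : ((Fin d → ℝ) × ℝ) →L[ℝ] ℝ))) (x, (0:ℝ)) :=
        hgd.comp (x, (0:ℝ)) hψ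
      have := hcd.fderiv
      rw [this]
      simp
    rw [← hzero]
    exact setIntegral_congr_fun hDm (fun x _ => (hcomp x).symm)
  -- the spatial mean
  set m : ℝ → ℂ := fun t => ∫ x in D, w (x, t) with hm
  -- pointwise heat equation rewritten
  have hheat' : ∀ x t, fderiv ℝ w (x, t) (0, 1) =
      ∑ j, fderiv ℝ (dirD (Pi.single j 1, 0) w) (x, t) (Pi.single j 1, 0) := by
    intro x t
    exact hheat (x, t)
  -- m has zero derivative everywhere
  have hmder : ∀ t, HasDerivAt m 0 t := by
    intro t
    have hder := HeatAux.hasDerivAt_setIntegral hsm hDm hDb t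
    have hsum : (∫ x in D, fderiv ℝ w (x, t) (0, 1)) = 0 := by
      have h2 : (∫ x in D, fderiv ℝ w (x, t) (0, 1)) =
          ∫ x in D, ∑ j, fderiv ℝ (dirD (Pi.single j 1, 0) w) (x, t) (Pi.single j 1, 0) :=
        setIntegral_congr_fun hDm (fun x _ => hheat' x t)
      rw [h2]
      rw [integral_finset_sum]
      · refine Finset.sum_eq_zero fun j _ => ?_
        refine hKey (dirD (Pi.single j 1, 0) w) (HeatAux.contDiff_dirD hsm _) ?_ _ t
        intro l hl x t'
        show fderiv ℝ w (x + l, t') (Pi.single j 1, 0) = fderiv ℝ w (x, t') (Pi.single j 1, 0)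
        have hp : ∀ z : (Fin d → ℝ) × ℝ, w (z + (l, 0)) = w z := by
          intro z
          have : z + ((l : Fin d → ℝ), (0:ℝ)) = (z.1 + l, z.2) := by
            simp [Prod.ext_iff]
          rw [this]
          exact hSPw l hl z.1 z.2
        have := HeatAux.fderiv_periodic hsm hp (x, t')
        have hxy : ((x : Fin d → ℝ), t') + ((l : Fin d → ℝ), (0:ℝ)) = (x + l, t') := by
          simp [Prod.ext_iff]
        rw [hxy] at this
        rw [this]
      · intro j _
        refine HeatAux.integrableOn_of_continuous ?_ hDb
        have hc : Continuous (dirD (Pi.single j 1, 0) (dirD (Pi.single j 1, 0) w)) :=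
          (HeatAux.contDiff_dirD (HeatAux.contDiff_dirD hsm _) _).continuous
        exact hc.comp (continuous_id.prodMk continuous_const)
    rw [← hsum]
    exact hder
  -- m is constant
  have hmconst : m (T + 1) = m (-1) :=
    is_const_of_deriv_eq_zero (fun t => (hmder t).differentiableAt)
      (fun t => (hmder t).deriv) _ _
  -- compute m at the endpoints
  have hm1 : m (-1) = 0 := by
    simp only [hm]
    have : (∫ x in D, w (x, (-1 : ℝ))) = ∫ x in D, (0 : ℂ) :=
      setIntegral_congr_fun hDm (fun x _ => h0 x (-1) (by norm_num))
    simpa using this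
  have hm2 : m (T + 1) = (volume D).toReal := by
    simp only [hm]
    have : (∫ x in D, w (x, T + 1)) = ∫ x in D, (1 : ℂ) :=
      setIntegral_congr_fun hDm (fun x _ => h1 x (T + 1) (by linarith))
    rw [this, setIntegral_const]
    simp
    rfl
  have hvol : (volume D).toReal ≠ 0 := by
    have h1 : volume D ≠ 0 := ZSpan.measure_fundamentalDomain_ne_zero b
    have h2 : volume D ≠ ⊤ := hDb.measure_lt_top.ne
    simp [ENNReal.toReal_eq_zero_iff, h1, h2]
  rw [hm1, hm2] at hmconst
  exact hvol (by exact_mod_cast hmconst)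
end
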